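/- arXiv:1812.10917 — 4 statements merged into one kernel-verified Lean document; each statement's English description precedes it below -/
import Mathlib

section
/- Let F be a field with |F| ≥ n^3 and let A, B be multisets of n elements of F with A ≠ B. If s is chosen uniformly at random from F, then the probability that ∏_{a∈A}(a - s) = ∏_{b∈B}(b - s) is at most n / n^3 = 1/n^2. -/
open Polynomial

/-- If `|F| ≥ n^3` and `A ≠ B` are multisets of `n` field elements, the probability
over a uniform `s ∈ F` that `∏_{a∈A}(a-s) = ∏_{b∈B}(b-s)` is at most `1/n^2`. -/
theorem stmt_1 {F : Type*} [Field F] [Fintype F] [DecidableEq F] (n : ℕ) (hn : 0 < n)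
    (hF : n ^ 3 ≤ Fintype.card F) (A B : Multiset F)
    (hA : Multiset.card A = n) (hB : Multiset.card B = n) (hAB : A ≠ B) :
    ((Finset.univ.filter (fun s : F =>
        (A.map (fun a => a - s)).prod = (B.map (fun b => b - s)).prod)).card : ℝ)
      / (Fintype.card F) ≤ 1 / (n ^ 2 : ℝ) := by
  set p : F[X] := (A.map (fun a => X - C a)).prod - (B.map (fun b => X - C b)).prod with hp
  have hpne : p ≠ 0 := by
    intro h
    apply hAB
    have : (A.map (fun a => X - C a)).prod = (B.map (fun b => X - C b)).prod :=
      sub_eq_zero.mp h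
    have := congrArg Polynomial.roots this
    rwa [roots_multiset_prod_X_sub_C, roots_multiset_prod_X_sub_C] at this
  have hdeg : p.natDegree ≤ n := by
    refine (natDegree_sub_le _ _).trans ?_
    rw [natDegree_multiset_prod_X_sub_C_eq_card, natDegree_multiset_prod_X_sub_C_eq_card,
      hA, hB, max_self]
  have heval : ∀ s : F, (A.map (fun a => a - s)).prod = (B.map (fun b => b - s)).prod →
      p.eval s = 0 := by
    intro s hs
    have h1 : ∀ (M : Multiset F), ((M.map (fun a => X - C a)).prod).eval s =
        (-1 : F) ^ Multiset.card M * (M.map (fun a => a - s)).prod := by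
      intro M
      rw [eval_multiset_prod, Multiset.map_map]
      simp only [Function.comp, eval_sub, eval_X, eval_C]
      calc (M.map (fun x => s - x)).prod
          = (M.map (fun x => (-1 : F) * (x - s))).prod := by
            congr 1; apply Multiset.map_congr rfl; intros; ring
        _ = (M.map (fun _ => (-1 : F))).prod * (M.map (fun x => x - s)).prod := by
            rw [← Multiset.prod_map_mul]
        _ = (-1 : F) ^ Multiset.card M * (M.map (fun a => a - s)).prod := by
            rw [Multiset.map_const', Multiset.prod_replicate]
    simp only [hp, eval_sub, h1, hA, hB, hs, sub_self]
  have hsub : (Finset.univ.filter (fun s : F =>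
      (A.map (fun a => a - s)).prod = (B.map (fun b => b - s)).prod)) ⊆ p.roots.toFinset := by
    intro s hs
    simp only [Finset.mem_filter] at hs
    rw [Multiset.mem_toFinset, mem_roots hpne]
    exact heval s hs.2
  have hcard : (Finset.univ.filter (fun s : F =>
      (A.map (fun a => a - s)).prod = (B.map (fun b => b - s)).prod)).card ≤ n := by
    exact (Finset.card_le_card hsub).trans
      ((Multiset.toFinset_card_le _).trans (p.card_roots'.trans hdeg))
  have hFpos : (0 : ℝ) < Fintype.card F := by positivity
  rw [div_le_div_iff₀ hFpos (by positivity), one_mul]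
  have h1 : ((Finset.univ.filter (fun s : F =>
      (A.map (fun a => a - s)).prod = (B.map (fun b => b - s)).prod)).card : ℝ) ≤ n := by
    exact_mod_cast hcard
  calc ((Finset.univ.filter (fun s : F =>
        (A.map (fun a => a - s)).prod = (B.map (fun b => b - s)).prod)).card : ℝ) * (n ^ 2 : ℝ)
      ≤ n * n ^ 2 := by
        apply mul_le_mul_of_nonneg_right h1 (by positivity)
    _ = (n ^ 3 : ℕ) := by push_cast; ring
    _ ≤ (Fintype.card F : ℝ) := by exact_mod_cast hF
end

section
/- Let a_1,...,a_n be integers with 1 ≤ a_i ≤ n for all i, and define y_i = (a_i mod n) + 1. Then the multiset {a_1,...,a_n} equals the multiset {y_1,...,y_n} if and only if (a_1,...,a_n) is a permutation of (1,...,n). -/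
/-!
Write `a i = b i + 1` with `b i : Fin n`. Then `y i` corresponds to `finRotate n (b i)`, so the
condition says that the multiset of the `b i` is invariant under the `n`-cycle `finRotate n`.
An invariant multiset has constant multiplicities along every cycle; as the cycle is transitive
and the multiset has `n` elements, every multiplicity is `1`.
-/

open Equiv Finset

namespace Multiset

variable {α : Type*} [DecidableEq α] {σ : Perm α} {s : Multiset α}

theorem count_apply_of_map_perm_eq (hs : s.map σ = s) (x : α) : s.count (σ x) = s.count x := by
  conv_lhs => rw [← hs]
  exact count_map_eq_count' σ s σ.injective x

theorem count_eq_of_map_perm_eq_of_sameCycle [Finite α] (hs : s.map σ = s) {x y : α}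
    (hxy : σ.SameCycle x y) : s.count x = s.count y := by
  obtain ⟨k, rfl⟩ := hxy.exists_nat_pow_eq
  induction k with
  | zero => rfl
  | succ k ih =>
    rw [pow_succ', Perm.mul_apply, count_apply_of_map_perm_eq hs,
      ih (σ.sameCycle_pow_right.2 .rfl)]

theorem map_perm_eq_self_iff_eq_univ [Fintype α] (hσ : ∀ x y, σ.SameCycle x y)
    (hcard : card s = Fintype.card α) : s.map σ = s ↔ s = univ.val := by
  refine ⟨fun hs => ?_, fun hs => hs ▸ map_univ_val_equiv σ⟩
  ext y
  have hs_nsmul : s = s.count y • univ.val := by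
    ext x
    rw [count_nsmul, count_univ, mul_one, count_eq_of_map_perm_eq_of_sameCycle hs (hσ x y)]
  have hmul : s.count y * Fintype.card α = Fintype.card α := by
    conv_rhs => rw [← hcard, hs_nsmul]
    rw [card_nsmul, Finset.card_val, Finset.card_univ]
  rwa [count_univ, ← mul_eq_right₀ (Fintype.card_pos_iff.2 ⟨y⟩).ne']

end Multiset

open Fin.NatCast in
theorem finRotate_pow_apply {n : ℕ} [NeZero n] (k : ℕ) (x : Fin n) :
    (finRotate n ^ k) x = x + (k : Fin n) := by
  induction k with
  | zero => simp
  | succ k ih => rw [pow_succ', Perm.mul_apply, ih, finRotate_apply, Nat.cast_succ, add_assoc]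

open Fin.NatCast in
theorem sameCycle_finRotate {n : ℕ} (x y : Fin n) : (finRotate n).SameCycle x y := by
  have := x.neZero
  refine ⟨(y - x).val, ?_⟩
  rw [zpow_natCast, finRotate_pow_apply, Fin.cast_val_eq_self, add_sub_cancel]

/-- With `1 ≤ a i ≤ n` and `y i = (a i mod n) + 1`, the multiset `{a i}` equals the
multiset `{y i}` iff `(a 1, …, a n)` is a permutation of `(1, …, n)` (i.e. the
multiset `{a i}` is exactly `{1, …, n}`). -/
theorem stmt_3 (n : ℕ) (hn : 0 < n) (a : Fin n → ℕ)
    (ha : ∀ i, 1 ≤ a i ∧ a i ≤ n) :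
    (Finset.univ.val.map a = Finset.univ.val.map (fun i => a i % n + 1)) ↔
      Finset.univ.val.map a = Finset.univ.val.map (fun i : Fin n => (i : ℕ) + 1) := by
  obtain ⟨m, rfl⟩ : ∃ m, n = m + 1 := ⟨n - 1, by omega⟩
  set g : Fin (m + 1) → ℕ := fun j => j + 1
  have hg : Function.Injective g := fun i j h => Fin.ext (by simpa [g] using h)
  set b : Fin (m + 1) → Fin (m + 1) := fun i => ⟨a i - 1, by have := ha i; omega⟩
  have ha_eq : a = g ∘ b := funext fun i => by
    simp only [g, b, Function.comp]
    have := ha i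
    omega
  have hy_eq : (fun i => a i % (m + 1) + 1) = g ∘ finRotate (m + 1) ∘ b := by
    funext i
    simp only [g, b, Function.comp, coe_finRotate, Fin.ext_iff, Fin.val_last]
    have := ha i
    split_ifs with h
    · rw [show a i = m + 1 by omega, Nat.mod_self]
    · rw [Nat.mod_eq_of_lt (by omega)]; omega
  rw [hy_eq, ha_eq, ← Multiset.map_map, ← Multiset.map_map, ← Multiset.map_map,
    (Multiset.map_injective hg).eq_iff, (Multiset.map_injective hg).eq_iff, eq_comm]
  exact Multiset.map_perm_eq_self_iff_eq_univ sameCycle_finRotate (by simp)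
end

section
/- Let G be a graph on n vertices containing a set S of marked vertices such that (1) exactly one vertex ℓ ∈ S is designated a leader, (2) every marked vertex has exactly K−1 marked neighbors, one of which is ℓ (or is ℓ itself and has K−1 marked neighbors). Then S is a clique of size exactly K. -/
/-! Since the leader is adjacent to every other marked vertex, its `K - 1` marked neighbours are
all of `S` but itself, so `|S| = K`. Every marked vertex then has `|S| - 1` marked neighbours,
and a vertex of `S` with that many neighbours in `S` is adjacent to all of them. -/

namespace SimpleGraph

variable {V : Type*} [DecidableEq V] (G : SimpleGraph V) [DecidableRel G.Adj] {S : Finset V} {u : V}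

theorem filter_adj_subset_erase : S.filter (fun v => G.Adj u v) ⊆ S.erase u := fun _ hv =>
  Finset.mem_erase.2 ⟨(G.ne_of_adj (Finset.mem_filter.1 hv).2).symm, (Finset.mem_filter.1 hv).1⟩

theorem card_filter_adj_eq_card_sub_one_iff (hu : u ∈ S) :
    (S.filter (fun v => G.Adj u v)).card = S.card - 1 ↔ ∀ v ∈ S, v ≠ u → G.Adj u v := by
  rw [← Finset.card_erase_of_mem hu]
  constructor
  · intro hcard v hv hvu
    have hfilter := Finset.eq_of_subset_of_card_le G.filter_adj_subset_erase hcard.ge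
    exact (Finset.mem_filter.1 (hfilter ▸ Finset.mem_erase.2 ⟨hvu, hv⟩)).2
  · intro hadj
    congr 1
    refine G.filter_adj_subset_erase.antisymm fun v hv => ?_
    obtain ⟨hvu, hvS⟩ := Finset.mem_erase.1 hv
    exact Finset.mem_filter.2 ⟨hvS, hadj v hvS hvu⟩

end SimpleGraph

theorem stmt_18_general {V : Type*} (G : SimpleGraph V) [DecidableRel G.Adj]
    (K : ℕ) (hK : 1 ≤ K) (S : Finset V) (l : V) (hl : l ∈ S)
    (hleader : (S.filter (fun u => G.Adj l u)).card = K - 1)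
    (hmarked : ∀ u ∈ S, u ≠ l →
      (S.filter (fun v => G.Adj u v)).card = K - 1 ∧ G.Adj l u) :
    S.card = K ∧ ∀ u ∈ S, ∀ v ∈ S, u ≠ v → G.Adj u v := by
  classical
  have hcard : S.card = K := by
    have hdeg := (G.card_filter_adj_eq_card_sub_one_iff hl).2 fun v hv hvl => (hmarked v hv hvl).2
    have hS : 0 < S.card := Finset.card_pos.2 ⟨l, hl⟩
    omega
  refine ⟨hcard, fun u hu v hv huv => ?_⟩
  have hdeg : (S.filter (fun v => G.Adj u v)).card = S.card - 1 := by
    rcases eq_or_ne u l with rfl | hul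
    · rw [hleader, hcard]
    · rw [(hmarked u hu hul).1, hcard]
  exact (G.card_filter_adj_eq_card_sub_one_iff hu).1 hdeg v hv huv.symm

/-- Soundness of the Clique protocol: if exactly one marked vertex `l` is the
leader, `l` has exactly `K−1` marked neighbors, and every other marked vertex has
exactly `K−1` marked neighbors one of which is `l`, then the marked set is a clique
of size exactly `K`. -/
theorem stmt_18 {V : Type*} [DecidableEq V] (G : SimpleGraph V) [DecidableRel G.Adj]
    (K : ℕ) (hK : 1 ≤ K) (S : Finset V) (l : V) (hl : l ∈ S)
    (hleader : (S.filter (fun u => G.Adj l u)).card = K - 1)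
    (hmarked : ∀ u ∈ S, u ≠ l →
      (S.filter (fun v => G.Adj u v)).card = K - 1 ∧ G.Adj l u) :
    S.card = K ∧ ∀ u ∈ S, ∀ v ∈ S, u ≠ v → G.Adj u v :=
  stmt_18_general G K hK S l hl hleader hmarked
end

section
/- Let T be a rooted tree on n vertices, n ≥ log n ≥ 1, with parameter b = ⌈log n⌉ (assume n ≥ b). Then there exists a partition of the edges of T into subtrees T_1,...,T_k (blocks) such that: each block is a connected subtree; every block except possibly one has between b and 2b vertices and the exceptional block has at most 3b vertices; any two distinct blocks share at most one vertex, and a shared vertex is the root of at least one of the two blocks. -/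
open Finset

namespace BlockDecomp

variable {V : Type*}

lemma subsum {α : Type*} (b : ℕ) (hb : 1 ≤ b) :
    ∀ (N : ℕ) (t : Finset α) (s : α → ℕ), t.card ≤ N → (∀ c ∈ t, s c ≤ b) →
      b ≤ ∑ c ∈ t, s c →
      ∃ S ⊆ t, b ≤ ∑ c ∈ S, s c ∧ ∑ c ∈ S, s c ≤ 2 * b - 1 := by
  classical
  intro N
  induction N with
  | zero =>
    intro t s hc hle hsum
    interval_cases h : t.card
    · rw [Finset.card_eq_zero] at h
      subst h; simp at hsum; omega
  | succ N ih =>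
    intro t s hc hle hsum
    by_cases hbig : ∑ c ∈ t, s c ≤ 2 * b - 1
    · exact ⟨t, subset_rfl, hsum, hbig⟩
    · push_neg at hbig
      have h2b : 2 * b ≤ ∑ c ∈ t, s c := by omega
      have hne : t.Nonempty := by
        rcases t.eq_empty_or_nonempty with h | h
        · subst h; simp at h2b; omega
        · exact h
      obtain ⟨c, hct⟩ := hne
      have herase : ∑ x ∈ t.erase c, s x + s c = ∑ x ∈ t, s x :=
        Finset.sum_erase_add _ _ hct
      have hscb := hle c hct
      obtain ⟨S, hS, h1, h2⟩ := ih (t.erase c) s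
        (by have := Finset.card_erase_of_mem hct; have := Finset.card_pos.mpr ⟨c, hct⟩; omega)
        (fun x hx => hle x (Finset.mem_of_mem_erase hx))
        (by omega)
      exact ⟨S, hS.trans (Finset.erase_subset _ _), h1, h2⟩

def desc (d : V → ℕ) (p : V → V) (v u : V) : Prop :=
  ∃ k, 0 < k ∧ k ≤ d u ∧ p^[k] u = v

open Classical in
noncomputable def subF (d : V → ℕ) (p : V → V) (A : Finset V) (c : V) : Finset V :=
  A.filter (fun u => u = c ∨ desc d p c u)

open Classical in
noncomputable def DF (d : V → ℕ) (p : V → V) (A : Finset V) (v : V) : Finset V :=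
  A.filter (fun u => desc d p v u)

lemma mem_subF {d : V → ℕ} {p : V → V} {A : Finset V} {c u : V} :
    u ∈ subF d p A c ↔ u ∈ A ∧ (u = c ∨ desc d p c u) := by
  classical simp [subF]

lemma mem_DF {d : V → ℕ} {p : V → V} {A : Finset V} {v u : V} :
    u ∈ DF d p A v ↔ u ∈ A ∧ desc d p v u := by
  classical simp [DF]

section

variable {d : V → ℕ} {p : V → V} {r : V}
variable (hd : ∀ v, v ≠ r → d (p v) + 1 = d v) (hd0 : ∀ v, d v = 0 ↔ v = r)

include hd hd0

lemma chain : ∀ (k : ℕ) (u : V), k ≤ d u → d (p^[k] u) + k = d u := by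
  intro k
  induction k with
  | zero => simp
  | succ k ih =>
    intro u hk
    have h1 : d (p^[k] u) + k = d u := ih u (by omega)
    have hne : p^[k] u ≠ r := by
      intro h
      have : d (p^[k] u) = 0 := (hd0 _).mpr h
      omega
    rw [Function.iterate_succ_apply']
    have := hd _ hne
    omega

lemma hroot (u : V) : p^[d u] u = r := by
  have := chain hd hd0 (d u) u le_rfl
  exact (hd0 _).mp (by omega)

end


section

variable {d : V → ℕ} {p : V → V} {r : V} {A : Finset V}

lemma dpos (hd0 : ∀ v, d v = 0 ↔ v = r) (hA1 : ∀ v ∈ A, v ≠ r) {u : V} (hu : u ∈ A) :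
    0 < d u := by
  have h1 := hA1 u hu
  rcases Nat.eq_zero_or_pos (d u) with h | h
  · exact absurd ((hd0 u).mp h) h1
  · exact h

lemma subF_subset (c : V) : subF d p A c ⊆ A := fun u hu => (mem_subF.mp hu).1

lemma DF_subset (v : V) : DF d p A v ⊆ A := fun u hu => (mem_DF.mp hu).1

lemma subF_exp {c u : V} (hu : u ∈ subF d p A c) : ∃ k, k ≤ d u ∧ p^[k] u = c := by
  rcases (mem_subF.mp hu).2 with h | ⟨k, _, hk, hpk⟩
  · exact ⟨0, Nat.zero_le _, h⟩
  · exact ⟨k, hk, hpk⟩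

lemma subF_depth (hd : ∀ v, v ≠ r → d (p v) + 1 = d v) (hd0 : ∀ v, d v = 0 ↔ v = r)
    {c u : V} (hu : u ∈ subF d p A c) : d c ≤ d u := by
  obtain ⟨k, hk, hpk⟩ := subF_exp hu
  have h := chain hd hd0 k u hk
  rw [hpk] at h
  omega

-- child-closedness of subtrees
lemma subF_child (hd : ∀ v, v ≠ r → d (p v) + 1 = d v) (hd0 : ∀ v, d v = 0 ↔ v = r)
    (hA1 : ∀ v ∈ A, v ≠ r) {c u' : V} (hu' : u' ∈ A) (hp : p u' ∈ subF d p A c) :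
    u' ∈ subF d p A c := by
  have hne := hA1 u' hu'
  have hdu : d (p u') + 1 = d u' := hd u' hne
  rcases (mem_subF.mp hp).2 with h | ⟨k, hk0, hkle, hpk⟩
  · exact mem_subF.mpr ⟨hu', Or.inr ⟨1, Nat.one_pos, by omega, h⟩⟩
  · refine mem_subF.mpr ⟨hu', Or.inr ⟨k + 1, by omega, by omega, ?_⟩⟩
    rw [Function.iterate_succ_apply]; exact hpk

-- parent of a non-root element of a subtree stays in the subtree
lemma subF_parent (hd : ∀ v, v ≠ r → d (p v) + 1 = d v) (hd0 : ∀ v, d v = 0 ↔ v = r)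
    (hA1 : ∀ v ∈ A, v ≠ r) (hA2 : ∀ v ∈ A, p v ∈ A ∨ p v = r)
    {c u : V} (hc : c ∈ A) (hu : u ∈ subF d p A c) (hne : u ≠ c) :
    p u ∈ subF d p A c := by
  have huA := (mem_subF.mp hu).1
  rcases (mem_subF.mp hu).2 with h | ⟨k, hk0, hkle, hpk⟩
  · exact absurd h hne
  obtain ⟨m, rfl⟩ : ∃ m, k = m + 1 := ⟨k - 1, by omega⟩
  rcases Nat.eq_zero_or_pos m with hm | hm
  · subst hm
    simp only [zero_add, Function.iterate_one] at hpk
    rw [hpk]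
    exact mem_subF.mpr ⟨hc, Or.inl rfl⟩
  · have hdu : d (p u) + 1 = d u := hd u (hA1 u huA)
    have hpA : p u ∈ A := by
      rcases hA2 u huA with h | h
      · exact h
      · exfalso
        have : d (p u) = 0 := (hd0 _).mpr h
        omega
    refine mem_subF.mpr ⟨hpA, Or.inr ⟨m, hm, by omega, ?_⟩⟩
    rw [← Function.iterate_succ_apply]
    exact hpk

lemma Achain (hd : ∀ v, v ≠ r → d (p v) + 1 = d v) (hd0 : ∀ v, d v = 0 ↔ v = r)
    (hA1 : ∀ v ∈ A, v ≠ r) (hA2 : ∀ v ∈ A, p v ∈ A ∨ p v = r) :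
    ∀ (k : ℕ) (u : V), u ∈ A → k < d u → p^[k] u ∈ A := by
  intro k
  induction k with
  | zero => intro u hu _; simpa using hu
  | succ k ih =>
    intro u hu hk
    have hcA : p^[k] u ∈ A := ih u hu (by omega)
    have hchain := chain hd hd0 (k + 1) u (by omega)
    rw [Function.iterate_succ_apply']
    rcases hA2 _ hcA with h | h
    · exact h
    · exfalso
      have h0 : d (p (p^[k] u)) = 0 := (hd0 _).mpr h
      rw [Function.iterate_succ_apply'] at hchain
      omega

open Classical in
lemma DF_eq_biUnion (hd : ∀ v, v ≠ r → d (p v) + 1 = d v) (hd0 : ∀ v, d v = 0 ↔ v = r)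
    (hA1 : ∀ v ∈ A, v ≠ r) (hA2 : ∀ v ∈ A, p v ∈ A ∨ p v = r) (v : V) :
    DF d p A v = (A.filter (fun c => p c = v)).biUnion (subF d p A) := by
  ext u
  simp only [Finset.mem_biUnion, Finset.mem_filter]
  constructor
  · intro hu
    obtain ⟨huA, k, hk0, hkle, hpk⟩ := mem_DF.mp hu
    obtain ⟨m, rfl⟩ : ∃ m, k = m + 1 := ⟨k - 1, by omega⟩
    have hchain := chain hd hd0 (m + 1) u hkle
    have hm : m < d u := by omega
    have hcA : p^[m] u ∈ A := Achain hd hd0 hA1 hA2 m u huA hm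
    refine ⟨p^[m] u, ⟨hcA, ?_⟩, ?_⟩
    · rw [Function.iterate_succ_apply'] at hpk; exact hpk
    · rcases Nat.eq_zero_or_pos m with hm0 | hm0
      · subst hm0; exact mem_subF.mpr ⟨huA, Or.inl (Function.iterate_zero_apply p u).symm⟩
      · exact mem_subF.mpr ⟨huA, Or.inr ⟨m, hm0, by omega, rfl⟩⟩
  · rintro ⟨c, ⟨hcA, hpc⟩, hu⟩
    have huA := (mem_subF.mp hu).1
    have hdc : 0 < d c := dpos hd0 hA1 hcA
    rcases (mem_subF.mp hu).2 with h | ⟨k, hk0, hkle, hpk⟩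
    · subst h
      exact mem_DF.mpr ⟨huA, 1, Nat.one_pos, by omega, by simpa using hpc⟩
    · have hchain := chain hd hd0 k u hkle
      rw [hpk] at hchain
      refine mem_DF.mpr ⟨huA, k + 1, by omega, by omega, ?_⟩
      rw [Function.iterate_succ_apply', hpk, hpc]

lemma subF_disjoint (hd : ∀ v, v ≠ r → d (p v) + 1 = d v) (hd0 : ∀ v, d v = 0 ↔ v = r)
    (hA1 : ∀ v ∈ A, v ≠ r) {v c c' : V} (hc : c ∈ A) (hc' : c' ∈ A)
    (hpc : p c = v) (hpc' : p c' = v) (hne : c ≠ c') :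
    Disjoint (subF d p A c) (subF d p A c') := by
  rw [Finset.disjoint_left]
  intro u hu hu'
  obtain ⟨k, hk, hpk⟩ := subF_exp hu
  obtain ⟨k', hk', hpk'⟩ := subF_exp hu'
  have h1 := chain hd hd0 k u hk
  have h2 := chain hd hd0 k' u hk'
  have e1 : d (p c) + 1 = d c := hd c (hA1 c hc)
  have e2 : d (p c') + 1 = d c' := hd c' (hA1 c' hc')
  rw [hpc] at e1; rw [hpc'] at e2
  have hkk : k = k' := by rw [hpk] at h1; rw [hpk'] at h2; omega
  subst hkk
  exact hne (by rw [← hpk, ← hpk'])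

open Classical in
lemma subF_card_le (c : V) : (subF d p A c).card ≤ (DF d p A c).card + 1 := by
  have h : subF d p A c ⊆ insert c (DF d p A c) := by
    intro u hu
    obtain ⟨huA, h⟩ := mem_subF.mp hu
    rcases h with h | h
    · rw [h]; exact Finset.mem_insert_self _ _
    · exact Finset.mem_insert_of_mem (mem_DF.mpr ⟨huA, h⟩)
  calc (subF d p A c).card ≤ (insert c (DF d p A c)).card := Finset.card_le_card h
    _ ≤ (DF d p A c).card + 1 := Finset.card_insert_le _ _

lemma DF_root (hd : ∀ v, v ≠ r → d (p v) + 1 = d v) (hd0 : ∀ v, d v = 0 ↔ v = r)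
    (hA1 : ∀ v ∈ A, v ≠ r) : DF d p A r = A := by
  ext u
  simp only [mem_DF, and_iff_left_iff_imp]
  intro hu
  exact ⟨d u, dpos hd0 hA1 hu, le_rfl, hroot hd hd0 u⟩

end


open Classical in
lemma carve_single {d : V → ℕ} {p : V → V} {r : V} (b : ℕ) (hb : 1 ≤ b)
    (hd0 : ∀ v, d v = 0 ↔ v = r) (A : Finset V)
    (hA1 : ∀ v ∈ A, v ≠ r) (hA2 : ∀ v ∈ A, p v ∈ A ∨ p v = r)
    (hsz : A.card + 1 ≤ 3 * b) :
    ∃ (k : ℕ) (C : Fin k → Finset V) (w : Fin k → V) (j₀ : Fin k),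
      (∀ i j, i ≠ j → Disjoint (C i) (C j)) ∧
      (∀ x, x ∈ A ↔ ∃ i, x ∈ C i) ∧
      (∀ i, ∀ u ∈ C i, (p u ∈ C i ∨ p u = w i) ∧ d (w i) < d u) ∧
      (∀ i, i ≠ j₀ → (C i).Nonempty ∧ b ≤ (C i).card + 1 ∧ (C i).card + 1 ≤ 2 * b) ∧
      (C j₀).card + 1 ≤ 3 * b := by
  refine ⟨1, fun _ => A, fun _ => r, 0, ?_, ?_, ?_, ?_, hsz⟩
  · intro i j hij
    exact absurd (Subsingleton.elim i j) hij
  · intro x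
    exact ⟨fun h => ⟨0, h⟩, fun ⟨_, h⟩ => h⟩
  · intro i u hu
    show (p u ∈ A ∨ p u = r) ∧ d r < d u
    refine ⟨hA2 u hu, ?_⟩
    have h1 : d r = 0 := (hd0 r).mpr rfl
    have h2 := dpos hd0 hA1 hu
    omega
  · intro i hi
    exact absurd (Subsingleton.elim i 0) hi

open Classical in
lemma carve {d : V → ℕ} {p : V → V} {r : V} (b : ℕ) (hb : 1 ≤ b)
    (hd : ∀ v, v ≠ r → d (p v) + 1 = d v) (hd0 : ∀ v, d v = 0 ↔ v = r) :
    ∀ (N : ℕ) (A : Finset V), A.card ≤ N →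
      (∀ v ∈ A, v ≠ r) → (∀ v ∈ A, p v ∈ A ∨ p v = r) →
    ∃ (k : ℕ) (C : Fin k → Finset V) (w : Fin k → V) (j₀ : Fin k),
      (∀ i j, i ≠ j → Disjoint (C i) (C j)) ∧
      (∀ x, x ∈ A ↔ ∃ i, x ∈ C i) ∧
      (∀ i, ∀ u ∈ C i, (p u ∈ C i ∨ p u = w i) ∧ d (w i) < d u) ∧
      (∀ i, i ≠ j₀ → (C i).Nonempty ∧ b ≤ (C i).card + 1 ∧ (C i).card + 1 ≤ 2 * b) ∧
      (C j₀).card + 1 ≤ 3 * b := by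
  intro N
  induction N with
  | zero =>
    intro A hcard hA1 hA2
    exact carve_single b hb hd0 A hA1 hA2 (by omega)
  | succ N ih =>
    intro A hcard hA1 hA2
    by_cases hsz : A.card + 1 ≤ 3 * b
    · exact carve_single b hb hd0 A hA1 hA2 hsz
    push_neg at hsz
    have hAb : b ≤ A.card := by omega
    -- pick deepest vertex with a large descendant set
    set F : Finset V := (insert r A).filter (fun v => b ≤ (DF d p A v).card) with hF
    have hrF : r ∈ F := by
      rw [hF, Finset.mem_filter, DF_root hd hd0 hA1]
      exact ⟨Finset.mem_insert_self _ _, hAb⟩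
    obtain ⟨v, hvF, hvmax⟩ := F.exists_max_image d ⟨r, hrF⟩
    have hvb : b ≤ (DF d p A v).card := (Finset.mem_filter.mp hvF).2
    set ch : Finset V := A.filter (fun c => p c = v) with hch
    have hch_mem : ∀ c ∈ ch, c ∈ A ∧ p c = v := fun c hc => Finset.mem_filter.mp hc
    have hch_depth : ∀ c ∈ ch, d c = d v + 1 := by
      intro c hc
      obtain ⟨hcA, hpc⟩ := hch_mem c hc
      have := hd c (hA1 c hcA)
      rw [hpc] at this
      omega
    have hsub_le : ∀ c ∈ ch, (subF d p A c).card ≤ b := by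
      intro c hc
      obtain ⟨hcA, hpc⟩ := hch_mem c hc
      have hDc : (DF d p A c).card < b := by
        by_contra hcon
        push_neg at hcon
        have hcF : c ∈ F := by
          rw [hF, Finset.mem_filter]
          exact ⟨Finset.mem_insert_of_mem hcA, hcon⟩
        have := hvmax c hcF
        have := hch_depth c hc
        omega
      have := subF_card_le (A := A) (d := d) (p := p) c
      omega
    have hDv : DF d p A v = ch.biUnion (subF d p A) :=
      DF_eq_biUnion hd hd0 hA1 hA2 v
    have hdisj : ∀ c ∈ ch, ∀ c' ∈ ch, c ≠ c' →
        Disjoint (subF d p A c) (subF d p A c') := by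
      intro c hc c' hc' hne
      exact subF_disjoint hd hd0 hA1 (hch_mem c hc).1 (hch_mem c' hc').1
        (hch_mem c hc).2 (hch_mem c' hc').2 hne
    have hsum : b ≤ ∑ c ∈ ch, (subF d p A c).card := by
      rw [← Finset.card_biUnion hdisj, ← hDv]
      exact hvb
    obtain ⟨S, hSch, hS1, hS2⟩ := subsum b hb ch.card ch (fun c => (subF d p A c).card)
      le_rfl hsub_le hsum
    set C₀ : Finset V := S.biUnion (subF d p A) with hC₀
    have hC₀card : C₀.card = ∑ c ∈ S, (subF d p A c).card :=
      Finset.card_biUnion (fun c hc c' hc' hne => hdisj c (hSch hc) c' (hSch hc') hne)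
    have hC₀A : C₀ ⊆ A := by
      intro u hu
      obtain ⟨c, _, hu⟩ := Finset.mem_biUnion.mp hu
      exact subF_subset c hu
    have hC₀p : ∀ u ∈ C₀, p u ∈ C₀ ∨ p u = v := by
      intro u hu
      obtain ⟨c, hcS, hu⟩ := Finset.mem_biUnion.mp hu
      by_cases hne : u = c
      · subst hne
        exact Or.inr (hch_mem u (hSch hcS)).2
      · exact Or.inl (Finset.mem_biUnion.mpr
          ⟨c, hcS, subF_parent hd hd0 hA1 hA2 (hch_mem c (hSch hcS)).1 hu hne⟩)
    have hC₀d : ∀ u ∈ C₀, d v < d u := by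
      intro u hu
      obtain ⟨c, hcS, hu⟩ := Finset.mem_biUnion.mp hu
      have h1 := subF_depth hd hd0 hu
      have h2 := hch_depth c (hSch hcS)
      omega
    have hC₀cc : ∀ u' ∈ A, p u' ∈ C₀ → u' ∈ C₀ := by
      intro u' hu' hp
      obtain ⟨c, hcS, hp⟩ := Finset.mem_biUnion.mp hp
      exact Finset.mem_biUnion.mpr ⟨c, hcS, subF_child hd hd0 hA1 hu' hp⟩
    set A' : Finset V := A \ C₀ with hA'
    have hA'1 : ∀ x ∈ A', x ≠ r := fun x hx => hA1 x (Finset.mem_sdiff.mp hx).1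
    have hA'2 : ∀ x ∈ A', p x ∈ A' ∨ p x = r := by
      intro x hx
      obtain ⟨hxA, hxC⟩ := Finset.mem_sdiff.mp hx
      rcases hA2 x hxA with h | h
      · left
        rw [Finset.mem_sdiff]
        refine ⟨h, fun hcon => hxC (hC₀cc x hxA hcon)⟩
      · exact Or.inr h
    have hC₀ne : 0 < C₀.card := by rw [hC₀card]; omega
    have hA'card : A'.card ≤ N := by
      have h1 : A'.card = A.card - C₀.card := Finset.card_sdiff_of_subset hC₀A
      have h2 : b ≤ C₀.card := by rw [hC₀card]; exact hS1
      omega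
    obtain ⟨k, C, w, j₀, ih1, ih2, ih3, ih4, ih5⟩ := ih A' hA'card hA'1 hA'2
    have hCsub : ∀ i, C i ⊆ A' := fun i x hx => (ih2 x).mpr ⟨i, hx⟩
    refine ⟨k + 1, Fin.cons C₀ C, Fin.cons v w, j₀.succ, ?_, ?_, ?_, ?_, ?_⟩
    · intro i j hij
      induction i using Fin.cases with
      | zero =>
        induction j using Fin.cases with
        | zero => exact absurd rfl hij
        | succ j =>
          simp only [Fin.cons_zero, Fin.cons_succ]
          exact Finset.disjoint_right.mpr (fun x hx =>
            (Finset.mem_sdiff.mp (hCsub j hx)).2)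
      | succ i =>
        induction j using Fin.cases with
        | zero =>
          simp only [Fin.cons_zero, Fin.cons_succ]
          exact Finset.disjoint_left.mpr (fun x hx =>
            (Finset.mem_sdiff.mp (hCsub i hx)).2)
        | succ j =>
          simp only [Fin.cons_succ]
          exact ih1 i j (fun h => hij (by rw [h]))
    · intro x
      rw [Fin.exists_fin_succ]
      simp only [Fin.cons_zero, Fin.cons_succ]
      constructor
      · intro hx
        by_cases hxC : x ∈ C₀
        · exact Or.inl hxC
        · exact Or.inr ((ih2 x).mp (Finset.mem_sdiff.mpr ⟨hx, hxC⟩))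
      · rintro (hx | ⟨i, hx⟩)
        · exact hC₀A hx
        · exact (Finset.mem_sdiff.mp ((ih2 x).mpr ⟨i, hx⟩)).1
    · intro i
      induction i using Fin.cases with
      | zero =>
        simp only [Fin.cons_zero]
        exact fun u hu => ⟨hC₀p u hu, hC₀d u hu⟩
      | succ i =>
        simp only [Fin.cons_succ]
        exact ih3 i
    · intro i hi
      induction i using Fin.cases with
      | zero =>
        simp only [Fin.cons_zero]
        refine ⟨Finset.card_pos.mp (by omega), by omega, by omega⟩
      | succ i =>
        simp only [Fin.cons_succ]
        exact ih4 i (fun h => hi (by rw [h]))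
    · simp only [Fin.cons_succ]
      exact ih5

end BlockDecomp

/-- Block decomposition of a rooted tree: the edges of a tree on `n ≥ b` vertices can
be partitioned into edge-disjoint connected blocks, each (except possibly one, which
has at most `3b` vertices) having between `b` and `2b` vertices, such that two
distinct blocks share at most one vertex, and a shared vertex is the root (vertex
closest to `r`) of at least one of the two blocks. -/
theorem stmt_19 {V : Type*} [Fintype V] (T : SimpleGraph V) (hT : T.IsTree) (r : V)
    (b : ℕ) (hb : 1 ≤ b) (hbn : b ≤ Fintype.card V) :
    ∃ (k : ℕ) (E : Fin k → Set (Sym2 V)),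
      (∀ i, E i ⊆ T.edgeSet) ∧
      (⋃ i, E i) = T.edgeSet ∧
      (∀ i j, i ≠ j → Disjoint (E i) (E j)) ∧
      (∀ i, ∀ u ∈ {v : V | ∃ e ∈ E i, v ∈ e}, ∀ w ∈ {v : V | ∃ e ∈ E i, v ∈ e},
        (SimpleGraph.fromEdgeSet (E i)).Reachable u w) ∧
      (∃ j₀ : Fin k,
        (∀ i, i ≠ j₀ →
          b ≤ {v : V | ∃ e ∈ E i, v ∈ e}.ncard ∧
            {v : V | ∃ e ∈ E i, v ∈ e}.ncard ≤ 2 * b) ∧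
        {v : V | ∃ e ∈ E j₀, v ∈ e}.ncard ≤ 3 * b) ∧
      (∀ i j, i ≠ j →
        ({v : V | ∃ e ∈ E i, v ∈ e} ∩ {v : V | ∃ e ∈ E j, v ∈ e}).ncard ≤ 1 ∧
        ∀ w ∈ {v : V | ∃ e ∈ E i, v ∈ e} ∩ {v : V | ∃ e ∈ E j, v ∈ e},
          (∀ u ∈ {v : V | ∃ e ∈ E i, v ∈ e}, T.dist r w ≤ T.dist r u) ∨
          (∀ u ∈ {v : V | ∃ e ∈ E j, v ∈ e}, T.dist r w ≤ T.dist r u)) := by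
  classical
  have hconn := hT.isConnected
  set d : V → ℕ := T.dist r with hdd
  have hd0 : ∀ v, d v = 0 ↔ v = r := by
    intro v
    rw [hdd, hconn.dist_eq_zero_iff]
    exact eq_comm
  have hpar : ∀ v, ∃ x, v ≠ r → (T.Adj v x ∧ d x + 1 = d v) := by
    intro v
    by_cases hv : v = r
    · exact ⟨r, fun h => absurd hv h⟩
    · have hdpos : T.dist v r ≠ 0 := by
        rw [SimpleGraph.dist_comm]
        intro h
        exact hv ((hd0 v).mp h)
      obtain ⟨W, hW⟩ := SimpleGraph.exists_walk_of_dist_ne_zero hdpos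
      cases W with
      | nil => exact absurd rfl hv
      | @cons _ x _ hadj W' =>
        refine ⟨x, fun _ => ⟨hadj, ?_⟩⟩
        have h1 : T.dist x r ≤ W'.length := SimpleGraph.dist_le W'
        have h2 : T.dist r v ≤ T.dist r x + T.dist x v := hconn.dist_triangle
        have h3 : T.dist x v = 1 := SimpleGraph.dist_eq_one_iff_adj.mpr hadj.symm
        have h4 : T.dist r x = T.dist x r := SimpleGraph.dist_comm
        have h5 : T.dist r v = T.dist v r := SimpleGraph.dist_comm
        have h6 : W'.length + 1 = T.dist v r := by
          simpa [SimpleGraph.Walk.length_cons] using hW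
        simp only [hdd]
        omega
  choose p hp using hpar
  have hd : ∀ v, v ≠ r → d (p v) + 1 = d v := fun v hv => (hp v hv).2
  have hadj : ∀ v, v ≠ r → T.Adj v (p v) := fun v hv => (hp v hv).1
  set A : Finset V := Finset.univ.erase r with hA
  have hA1 : ∀ v ∈ A, v ≠ r := fun v hv => Finset.ne_of_mem_erase hv
  have hA2 : ∀ v ∈ A, p v ∈ A ∨ p v = r := by
    intro v hv
    by_cases h : p v = r
    · exact Or.inr h
    · exact Or.inl (Finset.mem_erase.mpr ⟨h, Finset.mem_univ _⟩)
  obtain ⟨k, C, w, j₀, h1, h2, h3, h4, h5⟩ :=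
    BlockDecomp.carve b hb hd hd0 A.card A le_rfl hA1 hA2
  set f : V → Sym2 V := fun v => s(v, p v) with hf
  have hCA : ∀ i, ∀ u ∈ C i, u ∈ A := fun i u hu => (h2 u).mpr ⟨i, hu⟩
  have hfedge : ∀ v ∈ A, f v ∈ T.edgeSet := fun v hv => hadj v (hA1 v hv)
  have hfinj : ∀ v ∈ A, ∀ u ∈ A, f v = f u → v = u := by
    intro v hv u hu hvu
    rcases Sym2.eq_iff.mp hvu with ⟨h, _⟩ | ⟨hv1, hv2⟩
    · exact h
    · exfalso
      have e1 := hd v (hA1 v hv)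
      have e2 := hd u (hA1 u hu)
      rw [hv2] at e1
      rw [← hv1] at e2
      omega
  have hwd : ∀ i, ∀ u ∈ C i, d (w i) < d u := fun i u hu => (h3 i u hu).2
  have hwC : ∀ i, w i ∉ C i := fun i hcon => lt_irrefl _ (hwd i _ hcon)
  -- surjectivity of f onto the edge set
  have hAcard : A.card + 1 = Fintype.card V := by
    rw [hA, Finset.card_erase_of_mem (Finset.mem_univ r), Finset.card_univ]
    have : 1 ≤ Fintype.card V := le_trans hb hbn
    omega
  have himgcard : (A.image f).card = A.card :=
    Finset.card_image_of_injOn (fun v hv u hu h => hfinj v hv u hu h)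
  have himg : A.image f = T.edgeFinset := by
    apply Finset.eq_of_subset_of_card_le
    · intro e he
      obtain ⟨v, hv, rfl⟩ := Finset.mem_image.mp he
      exact SimpleGraph.mem_edgeFinset.mpr (hfedge v hv)
    · rw [himgcard]
      have := hT.card_edgeFinset
      omega
  have hedge_eq : T.edgeSet = ↑(A.image f) := by
    rw [himg, SimpleGraph.coe_edgeFinset]
  set E : Fin k → Set (Sym2 V) := fun i => f '' ↑(C i) with hE
  set vts : Fin k → Set V := fun i => {v : V | ∃ e ∈ E i, v ∈ e} with hvts
  have hverts_sub : ∀ i, vts i ⊆ ↑(C i) ∪ {w i} := by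
    intro i x hx
    obtain ⟨e, ⟨u, hu, rfl⟩, hxe⟩ := hx
    rcases Sym2.mem_iff.mp hxe with rfl | rfl
    · exact Or.inl hu
    · rcases (h3 i u hu).1 with h | h
      · exact Or.inl h
      · exact Or.inr (by rw [h]; rfl)
  have hverts_sup : ∀ i, ↑(C i) ⊆ vts i := by
    intro i u hu
    exact ⟨f u, ⟨u, hu, rfl⟩, Sym2.mem_mk_left _ _⟩
  have hw_in : ∀ i, (C i).Nonempty → w i ∈ vts i := by
    intro i hne
    obtain ⟨u, hu, hmin⟩ := Finset.exists_min_image (C i) d hne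
    have hpu : p u = w i := by
      rcases (h3 i u hu).1 with h | h
      · exfalso
        have := hmin _ h
        have := hd u (hA1 u (hCA i u hu))
        omega
      · exact h
    exact ⟨f u, ⟨u, hu, rfl⟩, by rw [hf]; simp only []; rw [← hpu]; exact Sym2.mem_mk_right _ _⟩
  have hverts_eq : ∀ i, (C i).Nonempty → vts i = ↑(C i) ∪ {w i} := by
    intro i hne
    apply Set.Subset.antisymm (hverts_sub i)
    intro x hx
    rcases hx with hx | hx
    · exact hverts_sup i hx
    · rw [hx]; exact hw_in i hne
  refine ⟨k, E, ?_, ?_, ?_, ?_, ⟨j₀, ?_, ?_⟩, ?_⟩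
  · -- subset of edgeSet
    intro i e he
    obtain ⟨u, hu, rfl⟩ := he
    exact hfedge u (hCA i u hu)
  · -- union
    rw [hedge_eq]
    ext e
    simp only [Set.mem_iUnion, hE, Set.mem_image, Finset.coe_image, Finset.mem_coe]
    constructor
    · rintro ⟨i, u, hu, rfl⟩
      exact Set.mem_image_of_mem f (hCA i u hu)
    · rintro ⟨u, hu, rfl⟩
      obtain ⟨i, hi⟩ := (h2 u).mp hu
      exact ⟨i, u, hi, rfl⟩
  · -- disjoint
    intro i j hij
    rw [Set.disjoint_left]
    rintro e ⟨u, hu, rfl⟩ ⟨u', hu', he⟩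
    have : u' = u := hfinj u' (hCA j u' hu') u (hCA i u hu) he
    subst this
    exact Finset.disjoint_left.mp (h1 i j hij) hu hu'
  · -- connectivity
    have hreach : ∀ i (n : ℕ), ∀ u, d u ≤ n → u ∈ C i →
        (SimpleGraph.fromEdgeSet (E i)).Reachable u (w i) := by
      intro i n
      induction n with
      | zero =>
        intro u hdu hu
        exact absurd ((hd0 u).mp (by omega)) (hA1 u (hCA i u hu))
      | succ n ih =>
        intro u hdu hu
        have hur : u ≠ r := hA1 u (hCA i u hu)
        have hdpu := hd u hur
        have hne : u ≠ p u := fun h => by rw [← h] at hdpu; omega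
        have hadj' : (SimpleGraph.fromEdgeSet (E i)).Adj u (p u) :=
          (SimpleGraph.fromEdgeSet_adj _).mpr ⟨⟨u, hu, rfl⟩, hne⟩
        rcases (h3 i u hu).1 with h | h
        · exact hadj'.reachable.trans (ih (p u) (by omega) h)
        · rw [← h]
          exact hadj'.reachable
    intro i u hu w' hw'
    have hru : (SimpleGraph.fromEdgeSet (E i)).Reachable u (w i) := by
      rcases hverts_sub i hu with h | h
      · exact hreach i (d u) u le_rfl h
      · rw [h]
    have hrw : (SimpleGraph.fromEdgeSet (E i)).Reachable w' (w i) := by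
      rcases hverts_sub i hw' with h | h
      · exact hreach i (d w') w' le_rfl h
      · rw [h]
    exact hru.trans hrw.symm
  · -- sizes, non-exceptional
    intro i hi
    obtain ⟨hne, hlb, hub⟩ := h4 i hi
    have he : vts i = ↑(insert (w i) (C i)) := by
      rw [hverts_eq i hne, Finset.coe_insert, Set.union_comm, Set.singleton_union]
    show b ≤ (vts i).ncard ∧ (vts i).ncard ≤ 2 * b
    rw [he, Set.ncard_coe_finset, Finset.card_insert_of_notMem (hwC i)]
    exact ⟨hlb, hub⟩
  · -- exceptional size
    have hsub : vts j₀ ⊆ ↑(insert (w j₀) (C j₀)) := by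
      intro x hx
      rcases hverts_sub j₀ hx with h | h
      · exact Finset.mem_insert_of_mem h
      · rw [h]; exact Finset.mem_insert_self _ _
    show (vts j₀).ncard ≤ 3 * b
    calc (vts j₀).ncard
        ≤ (↑(insert (w j₀) (C j₀)) : Set V).ncard :=
          Set.ncard_le_ncard hsub (Finset.finite_toSet _)
      _ = (insert (w j₀) (C j₀)).card := Set.ncard_coe_finset _
      _ ≤ (C j₀).card + 1 := Finset.card_insert_le _ _
      _ ≤ 3 * b := h5
  · -- intersections
    intro i j hij
    have key : ∀ z ∈ vts i ∩ vts j, z = w i ∨ z = w j := by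
      rintro z ⟨hzi, hzj⟩
      rcases hverts_sub i hzi with h | h
      · rcases hverts_sub j hzj with h' | h'
        · exact absurd h' (Finset.disjoint_left.mp (h1 i j hij) h)
        · exact Or.inr h'
      · exact Or.inl h
    have hnotboth : w i ≠ w j →
        ¬(w i ∈ vts i ∩ vts j ∧ w j ∈ vts i ∩ vts j) := by
      rintro hne ⟨⟨_, hwij⟩, ⟨hwji, _⟩⟩
      have h1' : w i ∈ (↑(C j) : Set V) := by
        rcases hverts_sub j hwij with h | h
        · exact h
        · exact absurd h hne
      have h2' : w j ∈ (↑(C i) : Set V) := by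
        rcases hverts_sub i hwji with h | h
        · exact h
        · exact absurd h (Ne.symm hne)
      have := hwd j _ h1'
      have := hwd i _ h2'
      omega
    constructor
    · -- ncard ≤ 1
      rw [Set.ncard_le_one (Set.toFinite _)]
      intro x hx y hy
      rcases key x hx with rfl | rfl <;> rcases key y hy with rfl | rfl
      · rfl
      · by_contra hne
        exact hnotboth hne ⟨hx, hy⟩
      · by_contra hne
        exact hnotboth (Ne.symm hne) ⟨hy, hx⟩
      · rfl
    · -- root condition
      intro z hz
      rcases key z hz with rfl | rfl
      · left
        intro u hu
        rcases hverts_sub i hu with h | h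
        · exact le_of_lt (hwd i u h)
        · rw [h]
      · right
        intro u hu
        rcases hverts_sub j hu with h | h
        · exact le_of_lt (hwd j u h)
        · rw [h]
end
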